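/- (Lemma 8, identity (5.11)) Let ρ₁ ∈ ℝ, ρ₂ = −(2/√5)ρ₁, ρ₃ = (2√3/√10)ρ₁, f = ρ₁e₁ + ρ₂e₂ + ρ₃e₃, and let P denote the orthogonal projection of ℝ⁴ onto the null space of L. If g ∈ ℝ⁴ is orthogonal to the null space of L and satisfies Lg = Ve₃ − P(Ve₃), then ⟨g, Vf⟩ = √6·ρ₁/(8B√5). -/

import Mathlib

open Finset

/-- The linearized collision operator of the one-dimensional Broadwell model with
collision frequency `B`, as a `4 × 4` matrix. -/
noncomputable def LBmat (B : ℝ) : Matrix (Fin 4) (Fin 4) ℝ :=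
  (-(B / 3)) • !![-2, Real.sqrt 2, Real.sqrt 2, -2;
                  Real.sqrt 2, -1, -1, Real.sqrt 2;
                  Real.sqrt 2, -1, -1, Real.sqrt 2;
                  -2, Real.sqrt 2, Real.sqrt 2, -2]

/-- `e₁ = (√2/2, 0, 0, −√2/2)`. -/
noncomputable def eB1 : EuclideanSpace ℝ (Fin 4) :=
  WithLp.toLp 2 ![Real.sqrt 2 / 2, 0, 0, -(Real.sqrt 2 / 2)]

/-- `e₂ = (1/√10, 2/√5, 0, 1/√10)`. -/
noncomputable def eB2 : EuclideanSpace ℝ (Fin 4) :=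
  WithLp.toLp 2 ![1 / Real.sqrt 10, 2 / Real.sqrt 5, 0, 1 / Real.sqrt 10]

/-- `e₃ = (1/√15, −1/√30, √5/√6, 1/√15)`. -/
noncomputable def eB3 : EuclideanSpace ℝ (Fin 4) :=
  WithLp.toLp 2 ![1 / Real.sqrt 15, -(1 / Real.sqrt 30), Real.sqrt 5 / Real.sqrt 6, 1 / Real.sqrt 15]

open scoped RealInnerProductSpace

/-- The Broadwell linearized collision operator as a linear map on `ℝ⁴` with the
Euclidean inner product. -/
noncomputable def LB (B : ℝ) : EuclideanSpace ℝ (Fin 4) →ₗ[ℝ] EuclideanSpace ℝ (Fin 4) :=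
  Matrix.toEuclideanLin (LBmat B)

/-- The diagonal velocity matrix `V = diag(1, 1/2, −1/2, −1)` applied to `f`. -/
noncomputable def VB (f : EuclideanSpace ℝ (Fin 4)) : EuclideanSpace ℝ (Fin 4) :=
  WithLp.toLp 2 ![f 0, f 1 / 2, -(f 2) / 2, -(f 3)]

/-!
`L = (B/3) w wᵀ` with `w = (√2, -1, -1, √2)`, so `ker L = wᗮ` and `g ⟂ ker L` forces `g ∈ ℝ w`.
Pairing `Lg = Ve₃ - P(Ve₃)` with `w` gives `2B⟪w, g⟫ = ⟪w, Ve₃⟫ = 3/√30`, while `V` is self-adjoint,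
so `⟪w, Vf⟫ = ⟪Vw, f⟫ = 3ρ₁`. Hence `⟪g, Vf⟫ = ⟪w, g⟫⟪w, Vf⟫/‖w‖² = 3ρ₁/(4B√30)`.
-/

theorem real_inner_eq_of_forall_inner_eq_zero_imp {E : Type*} [NormedAddCommGroup E]
    [InnerProductSpace ℝ E] {v g : E} (hg : ∀ h, ⟪v, h⟫ = 0 → ⟪g, h⟫ = 0) (y : E) :
    ⟪g, y⟫ = ⟪v, g⟫ * ⟪v, y⟫ / ⟪v, v⟫ := by
  have hperp : ⟪v, y - (⟪v, y⟫ / ⟪v, v⟫) • v⟫ = 0 := by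
    rw [inner_sub_right, inner_smul_right, div_mul_cancel_of_imp, sub_self]
    intro hvv
    rw [inner_self_eq_zero.1 hvv, inner_zero_left]
  have hgy := hg _ hperp
  rw [inner_sub_right, inner_smul_right, sub_eq_zero] at hgy
  rw [hgy, real_inner_comm v g]
  ring

noncomputable def wB : EuclideanSpace ℝ (Fin 4) := WithLp.toLp 2 ![Real.sqrt 2, -1, -1, Real.sqrt 2]

theorem real_inner_fin_four (x y : EuclideanSpace ℝ (Fin 4)) :
    ⟪x, y⟫ = x 0 * y 0 + x 1 * y 1 + x 2 * y 2 + x 3 * y 3 := by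
  simp [PiLp.inner_apply, Fin.sum_univ_four, mul_comm]

theorem real_inner_wB_self : ⟪wB, wB⟫ = 6 := by
  simp only [real_inner_fin_four, wB, Matrix.cons_val]
  norm_num

theorem wB_ne_zero : wB ≠ 0 := fun h => by simpa [h] using real_inner_wB_self

theorem LBmat_eq_smul_vecMulVec (B : ℝ) : LBmat B = (B / 3) • Matrix.vecMulVec wB.ofLp wB.ofLp := by
  have h2 : Real.sqrt 2 * Real.sqrt 2 = 2 := Real.mul_self_sqrt zero_le_two
  ext i j
  fin_cases i <;> fin_cases j <;> simp [LBmat, wB, h2]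

theorem LB_apply (B : ℝ) (x : EuclideanSpace ℝ (Fin 4)) : LB B x = (B / 3 * ⟪wB, x⟫) • wB := by
  rw [EuclideanSpace.inner_eq_star_dotProduct, star_trivial, dotProduct_comm]
  simp [LB, LBmat_eq_smul_vecMulVec, Matrix.toLpLin_apply, Matrix.vecMulVec_mulVec, mul_smul]

theorem mem_ker_LB_iff {B : ℝ} (hB : B ≠ 0) {x : EuclideanSpace ℝ (Fin 4)} :
    x ∈ LinearMap.ker (LB B) ↔ ⟪wB, x⟫ = 0 := by
  simp [LB_apply, hB, wB_ne_zero]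

theorem real_inner_wB_LB (B : ℝ) (x : EuclideanSpace ℝ (Fin 4)) :
    ⟪wB, LB B x⟫ = 2 * B * ⟪wB, x⟫ := by
  rw [LB_apply, inner_smul_right, real_inner_wB_self]
  ring

theorem real_inner_VB_right (x y : EuclideanSpace ℝ (Fin 4)) : ⟪x, VB y⟫ = ⟪VB x, y⟫ := by
  simp only [real_inner_fin_four, VB, Matrix.cons_val]
  ring

theorem real_inner_VB_wB_eB1 : ⟪VB wB, eB1⟫ = 2 := by
  simp only [real_inner_fin_four, wB, VB, eB1, Matrix.cons_val]
  ring_nf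
  norm_num

theorem real_inner_VB_wB_eB2 : ⟪VB wB, eB2⟫ = -(1 / Real.sqrt 5) := by
  simp only [real_inner_fin_four, wB, VB, eB2, Matrix.cons_val]
  ring

theorem real_inner_VB_wB_eB3 : ⟪VB wB, eB3⟫ = 3 / Real.sqrt 30 := by
  simp only [real_inner_fin_four, wB, VB, eB3, Matrix.cons_val]
  rw [show (30 : ℝ) = 5 * 6 by norm_num, Real.sqrt_mul (by norm_num)]
  field_simp
  rw [Real.sq_sqrt (by norm_num)]
  ring

theorem real_inner_wB_VB_combination (ρ₁ : ℝ) :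
    ⟪wB, VB (ρ₁ • eB1 + (-(2 / Real.sqrt 5) * ρ₁) • eB2
      + (2 * Real.sqrt 3 / Real.sqrt 10 * ρ₁) • eB3)⟫ = 3 * ρ₁ := by
  simp only [real_inner_VB_right, inner_add_right, inner_smul_right, real_inner_VB_wB_eB1,
    real_inner_VB_wB_eB2, real_inner_VB_wB_eB3]
  rw [show (30 : ℝ) = 3 * 10 by norm_num, Real.sqrt_mul (by norm_num)]
  field_simp
  simp only [Nat.ofNat_nonneg, Real.sq_sqrt]
  ring

/-- Lemma 8, identity (5.11): with `ρ₂ = −(2/√5)ρ₁`, `ρ₃ = (2√3/√10)ρ₁`,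
`f = ρ₁e₁ + ρ₂e₂ + ρ₃e₃` and `P` the orthogonal projection onto the null space of `L`,
if `g ⟂ ker L` and `Lg = Ve₃ − P(Ve₃)`, then `⟨g, Vf⟩ = √6 ρ₁/(8B√5)`. -/
theorem broadwell_inner_Linv_Ve3 (B : ℝ) (hB : 0 < B) (ρ₁ ρ₂ ρ₃ : ℝ)
    (h2 : ρ₂ = -(2 / Real.sqrt 5) * ρ₁) (h3 : ρ₃ = 2 * Real.sqrt 3 / Real.sqrt 10 * ρ₁)
    (f : EuclideanSpace ℝ (Fin 4)) (hf : f = ρ₁ • eB1 + ρ₂ • eB2 + ρ₃ • eB3)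
    (g : EuclideanSpace ℝ (Fin 4))
    (hg₁ : ∀ h ∈ LinearMap.ker (LB B), ⟪g, h⟫ = 0)
    (hg₂ : LB B g = VB eB3 -
      (Submodule.orthogonalProjectionOnto (LinearMap.ker (LB B)) (VB eB3) : EuclideanSpace ℝ (Fin 4))) :
    ⟪g, VB f⟫ = Real.sqrt 6 * ρ₁ / (8 * B * Real.sqrt 5) := by
  have hB0 : B ≠ 0 := hB.ne'
  have hwg : ⟪wB, g⟫ = 3 / Real.sqrt 30 / (2 * B) := by
    have hproj := (mem_ker_LB_iff hB0).1
      (Submodule.orthogonalProjectionOnto (LinearMap.ker (LB B)) (VB eB3)).2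
    rw [eq_div_iff (by positivity), mul_comm, ← real_inner_wB_LB, hg₂, inner_sub_right, hproj,
      sub_zero, real_inner_VB_right, real_inner_VB_wB_eB3]
  have hperp : ∀ h, ⟪wB, h⟫ = 0 → ⟪g, h⟫ = 0 := fun h hh => hg₁ h ((mem_ker_LB_iff hB0).2 hh)
  rw [real_inner_eq_of_forall_inner_eq_zero_imp hperp, hf, h2, h3, real_inner_wB_VB_combination,
    real_inner_wB_self, hwg, show (30 : ℝ) = 6 * 5 by norm_num, Real.sqrt_mul (by norm_num)]
  field_simp
  rw [Real.sq_sqrt (by norm_num)]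
  ring
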